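/- If Δ is a pure strongly connected d-dimensional simplicial complex whose vertex set is [n] with a unit interval order, then Δ is vertex decomposable. -/

import Mathlib

open Finset

/-- A simplicial complex on vertex set `ℕ`, given as the finite family of all of its
faces, closed under taking subsets. -/
def IsComplex (Δ : Finset (Finset ℕ)) : Prop :=
  ∀ F ∈ Δ, ∀ G ⊆ F, G ∈ Δ

/-- `F` is a facet (maximal face) of `Δ`. -/
def IsFacet (Δ : Finset (Finset ℕ)) (F : Finset ℕ) : Prop :=
  F ∈ Δ ∧ ∀ G ∈ Δ, F ⊆ G → F = G

/-- The finset of facets of `Δ`. -/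
def facets (Δ : Finset (Finset ℕ)) : Finset (Finset ℕ) :=
  Δ.filter fun F => ∀ G ∈ Δ, F ⊆ G → F = G

/-- `Δ` is pure of dimension `d`: every facet has `d + 1` vertices. -/
def IsPure (d : ℕ) (Δ : Finset (Finset ℕ)) : Prop :=
  ∀ F, IsFacet Δ F → F.card = d + 1

/-- Dual graph of a pure `d`-dimensional complex: nodes are facets, two facets are
adjacent iff they share a face with `d` elements (a codimension-one face). -/
def dualGraph (d : ℕ) (Δ : Finset (Finset ℕ)) : SimpleGraph {F // F ∈ facets Δ} :=
  SimpleGraph.fromRel fun F G => ((F : Finset ℕ) ∩ (G : Finset ℕ)).card = d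

/-- `Δ` is strongly connected: its dual graph is connected. -/
def StronglyConnected (d : ℕ) (Δ : Finset (Finset ℕ)) : Prop :=
  (dualGraph d Δ).Connected

/-- The labeling of the vertices by `ℕ` is a unit interval order: whenever
`F = {v₀ < v₁ < ⋯ < v_d}` is a facet, every `(d+1)`-element subset of the integer
interval `{v₀, v₀+1, …, v_d}` is a facet. -/
def UnitIntervalOrder (d : ℕ) (Δ : Finset (Finset ℕ)) : Prop :=
  ∀ F, IsFacet Δ F → ∀ hF : F.Nonempty,
    ∀ S ⊆ Finset.Icc (F.min' hF) (F.max' hF), S.card = d + 1 → IsFacet Δ S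

/-- The increasing list of the vertices of a face. -/
def sortedList (F : Finset ℕ) : List ℕ := F.sort (· ≤ ·)

/-- Lexicographic order on faces, comparing the increasing lists of vertices. -/
def faceLexLt (F G : Finset ℕ) : Prop :=
  List.Lex (· < ·) (sortedList F) (sortedList G)

/-- `L` lists exactly the facets of `Δ`, in lexicographic order. -/
def LexFacetList (Δ : Finset (Finset ℕ)) (L : List (Finset ℕ)) : Prop :=
  L.Nodup ∧ L.toFinset = facets Δ ∧ L.Pairwise faceLexLt

/-- `L` is a shelling order of the pure `d`-dimensional complex `Δ`: it lists the
facets of `Δ` so that for each `k`, the intersection of `⟨L[k+1]⟩` with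
`⟨L[0], …, L[k]⟩` is pure of dimension `d - 1`, i.e. it is nonempty and each of
its faces is contained in a common `d`-element face of `L[k+1]` and some earlier
facet. -/
def IsShellingOrder (d : ℕ) (Δ : Finset (Finset ℕ)) (L : List (Finset ℕ)) : Prop :=
  L.Nodup ∧ L.toFinset = facets Δ ∧
  ∀ (k : ℕ) (hk : k + 1 < L.length),
    (∃ τ ⊆ L.get ⟨k + 1, hk⟩, τ.card = d ∧ ∃ G ∈ L.take (k + 1), τ ⊆ G) ∧
    (∀ σ ⊆ L.get ⟨k + 1, hk⟩, (∃ G ∈ L.take (k + 1), σ ⊆ G) →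
      ∃ τ, σ ⊆ τ ∧ τ ⊆ L.get ⟨k + 1, hk⟩ ∧ τ.card = d ∧ ∃ G ∈ L.take (k + 1), τ ⊆ G)

/-- `Δ` is shellable (as a pure `d`-dimensional complex). -/
def Shellable (d : ℕ) (Δ : Finset (Finset ℕ)) : Prop :=
  ∃ L, IsShellingOrder d Δ L

/-- The link of the vertex `v` in `Δ`. -/
def linkC (Δ : Finset (Finset ℕ)) (v : ℕ) : Finset (Finset ℕ) :=
  Δ.filter fun E => v ∉ E ∧ insert v E ∈ Δ

/-- The deletion of the vertex `v` from `Δ`. -/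
def delC (Δ : Finset (Finset ℕ)) (v : ℕ) : Finset (Finset ℕ) :=
  Δ.filter fun E => v ∉ E

/-- Vertex decomposability: `Δ` is a simplex (possibly the void/empty simplex `{∅}`),
or it has a shedding vertex `v` whose link and deletion are vertex decomposable and
such that every facet of the deletion is a facet of `Δ`. -/
inductive VertexDecomposable : Finset (Finset ℕ) → Prop
  | simplex (V : Finset ℕ) : VertexDecomposable V.powerset
  | shed (Δ : Finset (Finset ℕ)) (v : ℕ) :
      VertexDecomposable (linkC Δ v) → VertexDecomposable (delC Δ v) →
      (∀ F, IsFacet (delC Δ v) F → IsFacet Δ F) → VertexDecomposable Δ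


/-!
Shed the largest vertex `M`. By the unit interval order, the link of `M` is the full
`(d - 1)`-skeleton of an interval `[a, M)`, and skeleta of simplices are vertex decomposable.
A facet through `M` spanning more than `d + 1` consecutive integers trades `M` for a missing
integer of its span; a facet through `M` of span exactly `d` is `[M - d, M]`. For `d ≥ 1`,
strong connectivity says that the left endpoints `a` of the facets `[a, a + d]` form an
interval, which makes `[M - d - 1, M - 1]` a facet as soon as some facet avoids `M`. So `M` is a
shedding vertex and the deletion inherits every hypothesis; if every facet contains `M`, then
`Δ` is the simplex on `[M - d, M]`. For `d = 0`, `Δ` is the `0`-skeleton of its vertex set.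
-/

lemma mem_facets_iff {Δ : Finset (Finset ℕ)} {F : Finset ℕ} :
    F ∈ facets Δ ↔ IsFacet Δ F := by
  simp [facets, IsFacet]

lemma exists_isFacet_superset {Δ : Finset (Finset ℕ)} {E : Finset ℕ} (hE : E ∈ Δ) :
    ∃ F, IsFacet Δ F ∧ E ⊆ F := by
  obtain ⟨F, hEF, hF, hmax⟩ := Δ.exists_le_maximal hE
  exact ⟨F, ⟨hF, fun G hG hFG => le_antisymm hFG (hmax hG hFG)⟩, hEF⟩

-- `k` counts vertices: `skeleton V k` is the `(k - 1)`-dimensional skeleton of the simplex on `V`.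
def skeleton (V : Finset ℕ) (k : ℕ) : Finset (Finset ℕ) :=
  V.powerset.filter fun E => E.card ≤ k

lemma mem_skeleton {V E : Finset ℕ} {k : ℕ} :
    E ∈ skeleton V k ↔ E ⊆ V ∧ E.card ≤ k := by
  simp [skeleton]

lemma skeleton_eq_powerset {V : Finset ℕ} {k : ℕ} (h : V.card ≤ k) :
    skeleton V k = V.powerset := by
  ext E
  simp only [mem_skeleton, mem_powerset, and_iff_left_iff_imp]
  exact fun hE => (card_le_card hE).trans h

lemma skeleton_zero (V : Finset ℕ) : skeleton V 0 = (∅ : Finset ℕ).powerset := by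
  ext E
  simp only [mem_skeleton, nonpos_iff_eq_zero, card_eq_zero, mem_powerset, subset_empty]
  exact ⟨And.right, fun h => ⟨h ▸ empty_subset V, h⟩⟩

lemma linkC_skeleton_insert {V : Finset ℕ} {v : ℕ} (hv : v ∉ V) (k : ℕ) :
    linkC (skeleton (insert v V) (k + 1)) v = skeleton V k := by
  ext E
  simp only [linkC, mem_filter, mem_skeleton]
  constructor
  · rintro ⟨-, hvE, hvEV, hcard⟩
    rw [card_insert_of_notMem hvE] at hcard
    exact ⟨(subset_insert_iff_of_notMem hvE).mp ((subset_insert v E).trans hvEV), by omega⟩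
  · rintro ⟨hEV, hcard⟩
    have hvE : v ∉ E := fun h => hv (hEV h)
    refine ⟨⟨hEV.trans (subset_insert v V), by omega⟩, hvE, insert_subset_insert v hEV, ?_⟩
    rw [card_insert_of_notMem hvE]
    omega

lemma delC_skeleton_insert {V : Finset ℕ} {v : ℕ} (hv : v ∉ V) (k : ℕ) :
    delC (skeleton (insert v V) k) v = skeleton V k := by
  ext E
  simp only [delC, mem_filter, mem_skeleton]
  constructor
  · rintro ⟨⟨hEV, hcard⟩, hvE⟩
    exact ⟨(subset_insert_iff_of_notMem hvE).mp hEV, hcard⟩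
  · rintro ⟨hEV, hcard⟩
    exact ⟨⟨hEV.trans (subset_insert v V), hcard⟩, fun h => hv (hEV h)⟩

lemma card_eq_of_isFacet_skeleton {V F : Finset ℕ} {k : ℕ} (hk : k ≤ V.card)
    (hF : IsFacet (skeleton V k) F) : F.card = k := by
  obtain ⟨hFV, hFk⟩ := mem_skeleton.mp hF.1
  by_contra hne
  obtain ⟨x, hxV, hxF⟩ := not_subset.mp fun hVF : V ⊆ F => by
    have := card_le_card hVF
    omega
  have hxF' : insert x F ∈ skeleton V k := by
    rw [mem_skeleton, card_insert_of_notMem hxF]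
    exact ⟨insert_subset hxV hFV, by omega⟩
  exact hxF (hF.2 _ hxF' (subset_insert x F) ▸ mem_insert_self x F)

theorem vertexDecomposable_skeleton (V : Finset ℕ) (k : ℕ) :
    VertexDecomposable (skeleton V k) := by
  induction V using Finset.induction_on generalizing k with
  | empty => exact skeleton_eq_powerset (V := ∅) (Nat.zero_le k) ▸ .simplex ∅
  | insert v V hv ih =>
    rcases k with _ | k
    · rw [skeleton_zero]
      exact VertexDecomposable.simplex ∅
    by_cases hk : (insert v V).card ≤ k + 1
    · rw [skeleton_eq_powerset hk]
      exact VertexDecomposable.simplex _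
    rw [card_insert_of_notMem hv] at hk
    refine .shed _ v (linkC_skeleton_insert hv k ▸ ih k)
      (delC_skeleton_insert hv _ ▸ ih (k + 1)) ?_
    intro F hF
    rw [delC_skeleton_insert hv] at hF
    have hFk := card_eq_of_isFacet_skeleton (by omega) hF
    refine ⟨mem_skeleton.mpr ⟨(mem_skeleton.mp hF.1).1.trans (subset_insert v V), hFk.le⟩,
      fun G hG hFG => eq_of_subset_of_card_le hFG ?_⟩
    rw [hFk]
    exact (mem_skeleton.mp hG).2

lemma Finset.subset_Icc_min'_max' {α : Type*} [LinearOrder α] [LocallyFiniteOrder α]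
    {s : Finset α} (h : s.Nonempty) : s ⊆ Icc (s.min' h) (s.max' h) := fun x hx =>
  mem_Icc.mpr ⟨s.min'_le x hx, s.le_max' x hx⟩

section Facets

variable {d : ℕ} {Δ : Finset (Finset ℕ)} {F H K L : Finset ℕ}

lemma IsPure.nonempty (hP : IsPure d Δ) (hF : IsFacet Δ F) : F.Nonempty :=
  card_pos.mp (by rw [hP F hF]; omega)

lemma IsPure.min'_add_le_max' (hP : IsPure d Δ) (hF : IsFacet Δ F) (h : F.Nonempty) :
    F.min' h + d ≤ F.max' h := by
  have := card_le_card (subset_Icc_min'_max' h)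
  rw [Nat.card_Icc, hP F hF] at this
  omega

lemma IsPure.eq_Icc_of_max'_le (hP : IsPure d Δ) (hH : IsFacet Δ H) (h : H.Nonempty)
    (hspan : H.max' h ≤ H.min' h + d) : H = Icc (H.max' h - d) (H.max' h) := by
  have := hP.min'_add_le_max' hH h
  refine eq_of_subset_of_card_le (fun x hx => mem_Icc.mpr ?_) ?_
  · have := H.min'_le x hx
    exact ⟨by omega, H.le_max' x hx⟩
  · rw [Nat.card_Icc, hP H hH]
    omega

lemma IsPure.min'_add_le_max'_succ (hP : IsPure d Δ) (hd : 1 ≤ d) (hK : IsFacet Δ K)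
    (hL : IsFacet Δ L) (hKL : (K ∩ L).card = d) :
    L.min' (hP.nonempty hL) + d ≤ K.max' (hP.nonempty hK) + 1 := by
  have := card_le_card (show K ∩ L ⊆ Icc (L.min' (hP.nonempty hL)) (K.max' (hP.nonempty hK))
    from fun x hx =>
    mem_Icc.mpr ⟨L.min'_le x (mem_inter.mp hx).2, K.le_max' x (mem_inter.mp hx).1⟩)
  rw [Nat.card_Icc, hKL] at this
  omega

lemma UnitIntervalOrder.isFacet_Icc (hU : UnitIntervalOrder d Δ) (hF : IsFacet Δ F)
    (h : F.Nonempty) {a : ℕ} (ha : F.min' h ≤ a) (had : a + d ≤ F.max' h) :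
    IsFacet Δ (Icc a (a + d)) :=
  hU F hF h _ (Icc_subset_Icc ha had) (by rw [Nat.card_Icc]; omega)

lemma UnitIntervalOrder.exists_isFacet_erase_subset (hP : IsPure d Δ)
    (hU : UnitIntervalOrder d Δ) (hH : IsFacet Δ H) (h : H.Nonempty)
    (hspan : H.min' h + d < H.max' h) {v : ℕ} (hv : v ∈ H) :
    ∃ G, IsFacet Δ G ∧ v ∉ G ∧ H.erase v ⊆ G := by
  have hHI := subset_Icc_min'_max' h
  obtain ⟨x, hxI, hxH⟩ := not_subset.mp fun hIH : Icc (H.min' h) (H.max' h) ⊆ H => by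
    have := card_le_card hIH
    rw [Nat.card_Icc, hP H hH] at this
    omega
  have hxv : x ≠ v := fun hxv => hxH (hxv ▸ hv)
  refine ⟨insert x (H.erase v), hU H hH h _ (insert_subset hxI ((erase_subset v H).trans hHI)) ?_,
    by simp [hxv.symm], subset_insert x _⟩
  rw [card_insert_of_notMem fun hx => hxH (mem_of_mem_erase hx), card_erase_of_mem hv, hP H hH,
    Nat.add_sub_cancel]

end Facets

def intervalFacetStarts (d : ℕ) (Δ : Finset (Finset ℕ)) : Set ℕ :=
  {a | IsFacet Δ (Icc a (a + d))}

section StronglyConnected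

variable {d : ℕ} {Δ : Finset (Finset ℕ)}

-- Adjacent facets overlap as intervals (`IsPure.min'_add_le_max'_succ`), so the windows
-- inside the facets along `w` leave no gap.
lemma mem_intervalFacetStarts_of_walk (hP : IsPure d Δ) (hU : UnitIntervalOrder d Δ)
    (hd : 1 ≤ d) {F G : {F // F ∈ facets Δ}} (w : (dualGraph d Δ).Walk F G) {a : ℕ}
    (hF : ∀ x ∈ F.1, x ≤ a + d) (hG : ∃ y ∈ G.1, a + d ≤ y) :
    a ∈ intervalFacetStarts d Δ := by
  induction w with
  | @nil K =>
    have hK := mem_facets_iff.mp K.2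
    have h := hP.nonempty hK
    obtain ⟨y, hy, hay⟩ := hG
    have := hP.min'_add_le_max' hK h
    have := K.1.le_max' y hy
    have := hF _ (K.1.max'_mem h)
    exact hU.isFacet_Icc hK h (by omega) (by omega)
  | @cons K L G hKL w ih =>
    by_cases hL : ∀ x ∈ L.1, x ≤ a + d
    · exact ih hL hG
    obtain ⟨y, hy, hay⟩ := not_forall₂.mp hL
    have hKf := mem_facets_iff.mp K.2
    have hLf := mem_facets_iff.mp L.2
    have hLne := hP.nonempty hLf
    by_cases hmin : L.1.min' hLne ≤ a
    · exact hU.isFacet_Icc hLf hLne hmin ((not_le.mp hay).le.trans (L.1.le_max' y hy))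
    have hinter : (K.1 ∩ L.1).card = d := by
      rcases ((SimpleGraph.fromRel_adj _ _ _).mp hKL).2 with h | h
      · exact h
      · rwa [inter_comm]
    have hKne := hP.nonempty hKf
    have := hP.min'_add_le_max'_succ hd hKf hLf hinter
    have := hP.min'_add_le_max' hKf hKne
    have := hF _ (K.1.max'_mem hKne)
    exact hU.isFacet_Icc hKf hKne (by omega) (by omega)

theorem ordConnected_intervalFacetStarts (hP : IsPure d Δ) (hU : UnitIntervalOrder d Δ)
    (hSC : StronglyConnected d Δ) (hd : 1 ≤ d) : (intervalFacetStarts d Δ).OrdConnected := by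
  refine ⟨fun a₁ h₁ a₂ h₂ a ha => ?_⟩
  obtain ⟨w⟩ :=
    hSC.preconnected ⟨_, mem_facets_iff.mpr h₁⟩ ⟨_, mem_facets_iff.mpr h₂⟩
  exact mem_intervalFacetStarts_of_walk hP hU hd w
    (fun x hx => (mem_Icc.mp hx).2.trans (by have := ha.1; omega))
    ⟨a₂ + d, mem_Icc.mpr ⟨by omega, le_rfl⟩, by have := ha.2; omega⟩

end StronglyConnected

-- Equivalent, for complexes, to the condition on `delC Δ v` in `VertexDecomposable.shed`.
def IsSheddingVertex (Δ : Finset (Finset ℕ)) (v : ℕ) : Prop :=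
  ∀ H, IsFacet Δ H → v ∈ H → ∃ G, IsFacet Δ G ∧ v ∉ G ∧ H.erase v ⊆ G

section Shedding

variable {d : ℕ} {Δ : Finset (Finset ℕ)} {v M : ℕ}

lemma IsSheddingVertex.isFacet_delC_iff (hshed : IsSheddingVertex Δ v) {F : Finset ℕ} :
    IsFacet (delC Δ v) F ↔ IsFacet Δ F ∧ v ∉ F := by
  constructor
  · rintro ⟨hF, hmax⟩
    obtain ⟨hFΔ, hvF⟩ := mem_filter.mp hF
    obtain ⟨H, hH, hFH⟩ := exists_isFacet_superset hFΔ
    by_cases hvH : v ∈ H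
    · obtain ⟨G, hG, hvG, hHG⟩ := hshed H hH hvH
      have hFG : F ⊆ G := fun x hx => hHG (mem_erase.mpr ⟨fun h => hvF (h ▸ hx), hFH hx⟩)
      exact hmax G (mem_filter.mpr ⟨hG.1, hvG⟩) hFG ▸ ⟨hG, hvG⟩
    · exact hmax H (mem_filter.mpr ⟨hH.1, hvH⟩) hFH ▸ ⟨hH, hvH⟩
  · rintro ⟨hF, hvF⟩
    exact ⟨mem_filter.mpr ⟨hF.1, hvF⟩, fun G hG => hF.2 G (mem_filter.mp hG).1⟩

lemma IsComplex.delC (hC : IsComplex Δ) : IsComplex (delC Δ v) := fun F hF G hGF =>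
  mem_filter.mpr ⟨hC F (mem_filter.mp hF).1 G hGF, fun hv => (mem_filter.mp hF).2 (hGF hv)⟩

variable (hM : ∀ F ∈ Δ, ∀ x ∈ F, x ≤ M)
include hM

lemma max'_eq_of_mem {F : Finset ℕ} (hF : F ∈ Δ) (hMF : M ∈ F) (h : F.Nonempty) :
    F.max' h = M :=
  le_antisymm (hM F hF _ (F.max'_mem h)) (F.le_max' M hMF)

lemma isSheddingVertex_of_not_mem (hP : IsPure d Δ) (hU : UnitIntervalOrder d Δ)
    (hW : (intervalFacetStarts d Δ).OrdConnected) {G₀ : Finset ℕ} (hG₀ : IsFacet Δ G₀)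
    (hMG₀ : M ∉ G₀) : IsSheddingVertex Δ M := by
  intro H hH hMH
  have h := hP.nonempty hH
  rcases lt_or_ge (H.min' h + d) (H.max' h) with hspan | hspan
  · exact hU.exists_isFacet_erase_subset hP hH h hspan hMH
  have hHI := hP.eq_Icc_of_max'_le hH h hspan
  rw [max'_eq_of_mem hM hH.1 hMH h] at hHI
  -- the top window of `G₀` lies strictly below `[M - d, M] = H`,
  -- so by order-connectedness `[M - d - 1, M - 1]` is a facet
  have h₀ := hP.nonempty hG₀
  have hG₀M : G₀.max' h₀ < M :=
    (hM G₀ hG₀.1 _ (G₀.max'_mem h₀)).lt_of_ne fun he => hMG₀ (he ▸ G₀.max'_mem h₀)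
  have := hP.min'_add_le_max' hG₀ h₀
  have hbot : G₀.max' h₀ - d ∈ intervalFacetStarts d Δ :=
    hU.isFacet_Icc hG₀ h₀ (by omega) (by omega)
  have htop : M - d ∈ intervalFacetStarts d Δ := by
    change IsFacet Δ (Icc (M - d) (M - d + d))
    rwa [Nat.sub_add_cancel (by omega), ← hHI]
  have hmid : M - d - 1 ∈ intervalFacetStarts d Δ :=
    hW.out hbot htop ⟨(by omega : G₀.max' h₀ - d ≤ M - d - 1), by omega⟩
  refine ⟨_, hmid, ?_, ?_⟩
  · simp only [mem_Icc]
    omega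
  · rw [hHI]
    intro x hx
    obtain ⟨hxM, hx⟩ := mem_erase.mp hx
    simp only [mem_Icc] at hx ⊢
    omega

lemma UnitIntervalOrder.delC (hU : UnitIntervalOrder d Δ) (hshed : IsSheddingVertex Δ M) :
    UnitIntervalOrder d (delC Δ M) := by
  intro F hF h S hS hcard
  obtain ⟨hFΔ, hMF⟩ := hshed.isFacet_delC_iff.mp hF
  have hFM : F.max' h < M :=
    (hM F hFΔ.1 _ (F.max'_mem h)).lt_of_ne fun he => hMF (he ▸ F.max'_mem h)
  exact hshed.isFacet_delC_iff.mpr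
    ⟨hU F hFΔ h S hS hcard, fun hMS => by have := (mem_Icc.mp (hS hMS)).2; omega⟩

lemma intervalFacetStarts_delC (hshed : IsSheddingVertex Δ M) :
    intervalFacetStarts d (delC Δ M) = intervalFacetStarts d Δ ∩ Set.Iio (M - d) := by
  ext a
  simp only [intervalFacetStarts, Set.mem_inter_iff, Set.mem_ofPred_eq, Set.mem_Iio,
    hshed.isFacet_delC_iff, mem_Icc, not_and, not_le]
  refine and_congr_right fun ha => ⟨fun h => ?_, fun h _ => by omega⟩
  have := hM _ ha.1 (a + d) (mem_Icc.mpr ⟨by omega, le_rfl⟩)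
  have := h (by omega)
  omega

lemma linkC_eq_skeleton (hC : IsComplex Δ) (hP : IsPure d Δ) (hU : UnitIntervalOrder d Δ)
    {Hm : Finset ℕ} {a : ℕ} (hHm : IsFacet Δ Hm) (hMHm : M ∈ Hm) (haHm : a ∈ Hm)
    (ha : ∀ F ∈ Δ, M ∈ F → ∀ x ∈ F, a ≤ x) :
    linkC Δ M = skeleton (Ico a M) d := by
  ext E
  simp only [linkC, mem_filter, mem_skeleton]
  constructor
  · rintro ⟨-, hME, hMEΔ⟩
    obtain ⟨F, hF, hMEF⟩ := exists_isFacet_superset hMEΔ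
    refine ⟨fun x hx => mem_Ico.mpr ?_, ?_⟩
    · have := ha F hF.1 (hMEF (mem_insert_self M E)) x (hMEF (mem_insert_of_mem hx))
      have := hM _ hMEΔ x (mem_insert_of_mem hx)
      have : x ≠ M := fun h => hME (h ▸ hx)
      omega
    · have := card_le_card hMEF
      rw [card_insert_of_notMem hME, hP F hF] at this
      omega
  · rintro ⟨hEI, hE⟩
    have hME : M ∉ E := fun h => by have := (mem_Ico.mp (hEI h)).2; omega
    have hm := hP.nonempty hHm
    have hmax := max'_eq_of_mem hM hHm.1 hMHm hm
    have := ha Hm hHm.1 hMHm _ (Hm.min'_mem hm)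
    have := Hm.min'_le a haHm
    have := hP.min'_add_le_max' hHm hm
    have hMEI : insert M E ⊆ Icc a M := insert_subset (mem_Icc.mpr ⟨by omega, le_rfl⟩)
      fun x hx => Ico_subset_Icc_self (hEI hx)
    obtain ⟨S, hMES, hSI, hS⟩ := exists_subsuperset_card_eq (n := d + 1) hMEI
      (by rw [card_insert_of_notMem hME]; omega) (by rw [Nat.card_Icc]; omega)
    have hSf := hU Hm hHm hm S (hSI.trans (Icc_subset_Icc (by omega) hmax.ge)) hS
    have hMEΔ := hC S hSf.1 _ hMES
    exact ⟨hC _ hMEΔ E (subset_insert M E), hME, hMEΔ⟩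

lemma exists_linkC_eq_skeleton (hC : IsComplex Δ) (hP : IsPure d Δ)
    (hU : UnitIntervalOrder d Δ) {F : Finset ℕ} (hF : F ∈ Δ) (hMF : M ∈ F) :
    ∃ a, linkC Δ M = skeleton (Ico a M) d := by
  set U := (Δ.filter (M ∈ ·)).sup id
  have hUne : U.Nonempty := ⟨M, mem_sup.mpr ⟨F, mem_filter.mpr ⟨hF, hMF⟩, hMF⟩⟩
  obtain ⟨E, hE, haE⟩ := mem_sup.mp (U.min'_mem hUne)
  obtain ⟨Hm, hHm, hEHm⟩ := exists_isFacet_superset (mem_filter.mp hE).1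
  exact ⟨U.min' hUne, linkC_eq_skeleton hM hC hP hU hHm (hEHm (mem_filter.mp hE).2) (hEHm haE)
    fun G hG hMG x hx => U.min'_le x (mem_sup.mpr ⟨G, mem_filter.mpr ⟨hG, hMG⟩, hx⟩)⟩

lemma eq_powerset_Icc_of_forall_mem (hC : IsComplex Δ) (hP : IsPure d Δ)
    (hU : UnitIntervalOrder d Δ) (hall : ∀ G, IsFacet Δ G → M ∈ G) {F₀ : Finset ℕ}
    (hF₀ : IsFacet Δ F₀) : Δ = (Icc (M - d) M).powerset := by
  have hfacet : ∀ H, IsFacet Δ H → H = Icc (M - d) M := by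
    intro H hH
    have h := hP.nonempty hH
    have hmax := max'_eq_of_mem hM hH.1 (hall H hH) h
    rcases lt_or_ge (H.min' h + d) (H.max' h) with hspan | hspan
    · obtain ⟨G, hG, hMG, -⟩ := hU.exists_isFacet_erase_subset hP hH h hspan (hall H hH)
      exact absurd (hall G hG) hMG
    · rw [hP.eq_Icc_of_max'_le hH h hspan, hmax]
  ext E
  rw [mem_powerset]
  constructor
  · intro hE
    obtain ⟨F, hF, hEF⟩ := exists_isFacet_superset hE
    exact hfacet F hF ▸ hEF
  · exact hC _ (hfacet F₀ hF₀ ▸ hF₀.1) E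

end Shedding

lemma eq_skeleton_of_isPure_zero {Δ : Finset (Finset ℕ)} (hC : IsComplex Δ) (hP : IsPure 0 Δ)
    (hne : Δ.Nonempty) : Δ = skeleton (Δ.sup id) 1 := by
  ext E
  rw [mem_skeleton]
  constructor
  · intro hE
    obtain ⟨F, hF, hEF⟩ := exists_isFacet_superset hE
    exact ⟨fun x hx => mem_sup.mpr ⟨E, hE, hx⟩, (card_le_card hEF).trans (hP F hF).le⟩
  · rintro ⟨hEV, hE⟩
    rcases Nat.le_one_iff_eq_zero_or_eq_one.mp hE with hE | hE
    · obtain ⟨F, hF⟩ := hne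
      exact hC F hF E (card_eq_zero.mp hE ▸ empty_subset F)
    · obtain ⟨x, rfl⟩ := card_eq_one.mp hE
      obtain ⟨F, hF, hxF⟩ := mem_sup.mp (hEV (mem_singleton_self x))
      exact hC F hF _ (singleton_subset_iff.mpr hxF)

theorem vertexDecomposable_of_ordConnected {d : ℕ} {Δ : Finset (Finset ℕ)}
    (hC : IsComplex Δ) (hP : IsPure d Δ) (hU : UnitIntervalOrder d Δ)
    (hW : (intervalFacetStarts d Δ).OrdConnected) (hne : Δ.Nonempty) :
    VertexDecomposable Δ := by
  induction hn : Δ.card using Nat.strong_induction_on generalizing Δ with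
  | _ n ih =>
  obtain ⟨F₀, hF₀⟩ := hne
  obtain ⟨H₀, hH₀, -⟩ := exists_isFacet_superset hF₀
  obtain ⟨x₀, hx₀⟩ := hP.nonempty hH₀
  have hV : (Δ.sup id).Nonempty := ⟨x₀, mem_sup.mpr ⟨H₀, hH₀.1, hx₀⟩⟩
  set M := (Δ.sup id).max' hV
  have hM : ∀ F ∈ Δ, ∀ x ∈ F, x ≤ M := fun F hF x hx =>
    le_max' _ _ (mem_sup.mpr ⟨F, hF, hx⟩)
  obtain ⟨F, hF, hMF⟩ := mem_sup.mp ((Δ.sup id).max'_mem hV)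
  by_cases hG : ∃ G, IsFacet Δ G ∧ M ∉ G
  swap
  · push Not at hG
    rw [eq_powerset_Icc_of_forall_mem hM hC hP hU hG hH₀]
    exact .simplex _
  obtain ⟨G₀, hG₀, hMG₀⟩ := hG
  have hshed := isSheddingVertex_of_not_mem hM hP hU hW hG₀ hMG₀
  refine .shed Δ M ?_ ?_ fun F hF => (hshed.isFacet_delC_iff.mp hF).1
  · obtain ⟨a, ha⟩ := exists_linkC_eq_skeleton hM hC hP hU hF hMF
    exact ha ▸ vertexDecomposable_skeleton _ _
  · refine ih _ (hn ▸ card_lt_card (filter_ssubset.mpr ⟨F, hF, not_not.mpr hMF⟩)) hC.delC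
      (fun F hF => hP F (hshed.isFacet_delC_iff.mp hF).1) (hU.delC hM hshed) ?_
      ⟨G₀, mem_filter.mpr ⟨hG₀.1, hMG₀⟩⟩ rfl
    rw [intervalFacetStarts_delC hM hshed]
    exact hW.inter Set.ordConnected_Iio

theorem stmt3_general (d : ℕ) (Δ : Finset (Finset ℕ))
    (hC : IsComplex Δ) (hP : IsPure d Δ) (hSC : StronglyConnected d Δ)
    (hU : UnitIntervalOrder d Δ) :
    VertexDecomposable Δ := by
  obtain ⟨⟨F, hF⟩⟩ := hSC.nonempty
  have hne : Δ.Nonempty := ⟨F, (mem_facets_iff.mp hF).1⟩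
  rcases Nat.eq_zero_or_pos d with rfl | hd
  · rw [eq_skeleton_of_isPure_zero hC hP hne]
    exact vertexDecomposable_skeleton _ _
  · exact vertexDecomposable_of_ordConnected hC hP hU
      (ordConnected_intervalFacetStarts hP hU hSC hd) hne

theorem stmt3 (n d : ℕ) (Δ : Finset (Finset ℕ))
    (hC : IsComplex Δ) (hP : IsPure d Δ) (hSC : StronglyConnected d Δ)
    (hU : UnitIntervalOrder d Δ) (hV : Δ.sup id ⊆ Finset.Icc 1 n) :
    VertexDecomposable Δ :=
  stmt3_general d Δ hC hP hSC hU
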